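/- For real numbers α > 0 and 0 ≤ β < 1, setting p = 1/(1-β), the series S(2,α,β) = ∑_{k=0}^∞ (α + βk)^{k+1}/k! · e^{-(α+βk)} equals p·(α·p + β²·p²) = α/(1-β)² + β²/(1-β)³. -/

import Mathlib

/-!
With `t = β e^(-β)` and `c = α / β` the series is `β e^(-α) ∑ (c + k)^(k+1) t^k / k!`, an
exponential generating function evaluated inside its disc of convergence `|t| < 1/e`.
Abel's identity `∑ C(n,k) x (x + k)^(k-1) (y - k)^(n-k) = (x + y)^n` turns products of
`E_c = ∑ c (c + k)^(k-1) t^k / k!` and `B_d = ∑ (d + k)^k t^k / k!` into `E_c B_d = B_(c+d)`.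
For the tree function `T = t E_1` this gives `B_0 (1 - T) = 1` and, since `E_c e^(-c T)` has
zero derivative, `E_c = e^(c T)`; hence `T e^(-T) = t`, so `T (β e^(-β)) = β` for `0 ≤ β < 1`.
Finally `∑ (c + k)^(k+1) t^k / k! = c B_c + t B_c'` with `B_c = e^(c T) / (1 - T)`.
-/

open Finset Real
open scoped Nat

-- `x (x + k)^(k-1)`, with the value at `k = 0` read as `x · x⁻¹ = 1`.
noncomputable def abelPoly (x : ℝ) : ℕ → ℝ
  | 0 => 1
  | k + 1 => x * (x + (k + 1)) ^ k

theorem sum_neg_one_pow_choose_mul_add_pow {m n : ℕ} (hmn : m < n) (x : ℝ) :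
    ∑ k ∈ range (n + 1), (-1) ^ (n - k) * n.choose k * (x + k) ^ m = 0 := by
  have hdeg : ((Polynomial.X + Polynomial.C x) ^ m).natDegree < n := by
    rw [Polynomial.natDegree_pow, Polynomial.natDegree_X_add_C]; omega
  have h := congr_fun (Polynomial.fwdDiff_iter_eq_zero_of_degree_lt hdeg) 0
  rw [fwdDiff_iter_eq_sum_shift] at h
  simpa [zsmul_eq_mul, add_comm x] using h

theorem hasDerivAt_sum_choose_mul_sub_pow (n : ℕ) (a : ℕ → ℝ) (y : ℝ) :
    HasDerivAt (fun y => ∑ k ∈ range (n + 2), (n + 1).choose k * a k * (y - k) ^ (n + 1 - k))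
      ((n + 1) * ∑ k ∈ range (n + 1), n.choose k * a k * (y - k) ^ (n - k)) y := by
  have hterm : ∀ k ∈ range (n + 2),
      HasDerivAt (fun y => (n + 1).choose k * a k * (y - k) ^ (n + 1 - k))
        ((n + 1).choose k * a k * ((n + 1 - k : ℕ) * (y - k) ^ (n - k))) y := by
    intro k _
    have h := ((hasDerivAt_id y).sub_const (k : ℝ)).pow (n + 1 - k)
    rw [show n + 1 - k - 1 = n - k by omega] at h
    simpa using h.const_mul ((n + 1).choose k * a k : ℝ)
  refine (HasDerivAt.fun_sum hterm).congr_deriv ?_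
  rw [sum_range_succ, Nat.sub_self, Nat.cast_zero, zero_mul, mul_zero, add_zero, mul_sum]
  refine sum_congr rfl fun k hk => ?_
  have h := congrArg (Nat.cast : ℕ → ℝ) (Nat.choose_mul_succ_eq n k)
  push_cast at h
  linear_combination (-(a k * (y - k) ^ (n - k))) * h

theorem abel_identity (n : ℕ) (x y : ℝ) :
    ∑ k ∈ range (n + 1), n.choose k * abelPoly x k * (y - k) ^ (n - k) = (x + y) ^ n := by
  induction n generalizing y with
  | zero => simp [abelPoly]
  | succ n ih =>
    set F : ℝ → ℝ := fun y => ∑ k ∈ range (n + 2),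
      (n + 1).choose k * abelPoly x k * (y - k) ^ (n + 1 - k) - (x + y) ^ (n + 1)
    have hF : ∀ y, HasDerivAt F 0 y := fun y => by
      have h := (hasDerivAt_sum_choose_mul_sub_pow n (abelPoly x) y).fun_sub
        (((hasDerivAt_id y).const_add x).pow (n + 1))
      simpa [ih] using h
    -- At `y = -x` every term is `x (-1)^(n+1-k) (x+k)^n`, and these alternate to zero.
    have hF0 : F (-x) = 0 := by
      have hterm : ∀ k ∈ range (n + 2), (n + 1).choose k * abelPoly x k * (-x - k) ^ (n + 1 - k)
          = x * ((-1) ^ (n + 1 - k) * (n + 1).choose k * (x + k) ^ n) := by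
        intro k hk
        rw [show -x - k = -1 * (x + k) by ring, mul_pow]
        rcases k with _ | k
        · simp [abelPoly]; ring
        · have hk' : k ≤ n := by simp at hk; omega
          have hpow : (x + (k + 1)) ^ k * (x + (k + 1)) ^ (n - k) = (x + (k + 1)) ^ n := by
            rw [← pow_add]; congr 1; omega
          simp only [abelPoly, Nat.cast_succ, show n + 1 - (k + 1) = n - k by omega]
          linear_combination ((n + 1).choose (k + 1) * x * (-1) ^ (n - k) : ℝ) * hpow
      simp only [F, sum_congr rfl hterm, ← mul_sum,
        sum_neg_one_pow_choose_mul_add_pow (Nat.lt_succ_self n)]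
      simp
    have := is_const_of_deriv_eq_zero (fun y => (hF y).differentiableAt)
      (fun y => (hF y).deriv) y (-x)
    rw [hF0] at this
    simpa [F, sub_eq_zero] using this

noncomputable def egf (a : ℕ → ℝ) (t : ℝ) : ℝ := ∑' k, a k / k ! * t ^ k

section egf

variable {a b : ℕ → ℝ} {C r t : ℝ}

theorem summable_norm_egf (ha : ∀ k, |a k| ≤ C * k ! / r ^ k) (ht : |t| < r) :
    Summable fun k => ‖a k / k ! * t ^ k‖ := by
  have hr : 0 < r := (abs_nonneg t).trans_lt ht
  refine Summable.of_nonneg_of_le (fun k => norm_nonneg _) (fun k => ?_)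
    ((summable_geometric_of_lt_one (by positivity) ((div_lt_one hr).2 ht)).mul_left C)
  rw [norm_mul, norm_div, norm_pow, Real.norm_eq_abs, Real.norm_eq_abs, Nat.abs_cast, div_pow]
  have hk : (0 : ℝ) < k ! := by positivity
  calc |a k| / k ! * |t| ^ k ≤ C * k ! / r ^ k / k ! * |t| ^ k := by gcongr; exact ha k
    _ = C * (|t| ^ k / r ^ k) := by field_simp

theorem hasSum_egf (ha : ∀ k, |a k| ≤ C * k ! / r ^ k) (ht : |t| < r) :
    HasSum (fun k => a k / k ! * t ^ k) (egf a t) :=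
  (summable_norm_egf ha ht).of_norm.hasSum

theorem egf_zero : egf a 0 = a 0 := by
  rw [egf, tsum_eq_single 0 fun k hk => by simp [hk]]
  simp

theorem hasSum_egf_succ (ha : ∀ k, |a k| ≤ C * k ! / r ^ k) (ht : |t| < r) :
    HasSum (fun k => a (k + 1) / k ! * t ^ k) (egf (fun k => a (k + 1)) t) := by
  have hr : 0 < r := (abs_nonneg t).trans_lt ht
  have hC : 0 ≤ C := by simpa using (abs_nonneg _).trans (ha 0)
  have hq : ‖|t| / r‖ < 1 := by
    rwa [Real.norm_eq_abs, abs_div, abs_abs, abs_of_pos hr, div_lt_one hr]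
  have hu : Summable fun k : ℕ => C / r * ((k : ℝ) ^ 1 * (|t| / r) ^ k + (|t| / r) ^ k) :=
    ((summable_pow_mul_geometric_of_norm_lt_one 1 hq).add
      (summable_geometric_of_norm_lt_one hq)).mul_left _
  refine (hu.of_norm_bounded fun k => ?_).hasSum
  rw [norm_mul, norm_div, norm_pow, Real.norm_eq_abs, Real.norm_eq_abs, Nat.abs_cast]
  calc |a (k + 1)| / k ! * |t| ^ k ≤ C * (k + 1)! / r ^ (k + 1) / k ! * |t| ^ k := by
        gcongr; exact ha _
    _ = C / r * ((k : ℝ) ^ 1 * (|t| / r) ^ k + (|t| / r) ^ k) := by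
        rw [Nat.factorial_succ, div_pow]; push_cast; field_simp; ring

theorem hasDerivAt_egf (ha : ∀ k, |a k| ≤ C * k ! / r ^ k) (ht : |t| < r) :
    HasDerivAt (egf a) (egf (fun k => a (k + 1)) t) t := by
  obtain ⟨s, hts, hsr⟩ := exists_between ht
  have hs : 0 < s := (abs_nonneg t).trans_lt hts
  -- the termwise derivatives on `(-s, s)` are dominated by their values at `s`
  set u : ℕ → ℝ := fun k => ‖a k / k ! * (k * s ^ (k - 1))‖
  have hu : Summable u := by
    rw [← summable_nat_add_iff 1]
    refine (hasSum_egf_succ ha (by rwa [abs_of_pos hs])).summable.abs.congr fun k => ?_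
    simp only [u, norm_mul, norm_div, norm_pow, Real.norm_eq_abs, abs_mul, abs_div, abs_pow,
      Nat.abs_cast, Nat.factorial_succ, Nat.add_sub_cancel, abs_of_pos hs]
    push_cast; field_simp
  have hbound : ∀ k, ∀ y ∈ Set.Ioo (-s) s, ‖a k / k ! * (k * y ^ (k - 1))‖ ≤ u k := by
    intro k y hy
    simp only [u, norm_mul, norm_pow, Real.norm_eq_abs, abs_of_pos hs]
    gcongr
    exact (abs_lt.2 hy).le
  have hderiv := hasDerivAt_tsum_of_isPreconnected (g := fun k y => a k / k ! * y ^ k)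
    (g' := fun k y => a k / k ! * (k * y ^ (k - 1))) hu isOpen_Ioo isPreconnected_Ioo
    (fun k y _ => by simpa using (hasDerivAt_pow k y).const_mul (a k / k !)) hbound
    (y₀ := 0) (by simp [hs]) (hasSum_egf ha (by simpa using hs.trans hsr)).summable
    (abs_lt.1 hts)
  refine hderiv.congr_deriv (HasSum.tsum_eq ?_)
  rw [← hasSum_nat_add_iff' 1]
  simp only [range_one, sum_singleton, Nat.cast_zero, zero_mul, mul_zero, sub_zero]
  refine (hasSum_egf_succ ha ht).congr_fun fun k => ?_
  rw [Nat.factorial_succ, Nat.add_sub_cancel]; push_cast; field_simp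

theorem egf_mul {D : ℝ} (ha : ∀ k, |a k| ≤ C * k ! / r ^ k)
    (hb : ∀ k, |b k| ≤ D * k ! / r ^ k) (ht : |t| < r) :
    egf a t * egf b t = egf (fun n => ∑ k ∈ range (n + 1), n.choose k * a k * b (n - k)) t := by
  rw [egf, egf, tsum_mul_tsum_eq_tsum_sum_range_of_summable_norm (summable_norm_egf ha ht)
    (summable_norm_egf hb ht), egf]
  refine tsum_congr fun n => ?_
  rw [sum_div, sum_mul]
  refine sum_congr rfl fun k hk => ?_
  have hkn : k ≤ n := Nat.lt_succ_iff.1 (mem_range.1 hk)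
  have hfac := congrArg (Nat.cast : ℕ → ℝ) (Nat.choose_mul_factorial_mul_factorial hkn)
  push_cast at hfac
  have hchoose : (n.choose k : ℝ) ≠ 0 := by exact_mod_cast (Nat.choose_pos hkn).ne'
  rw [← hfac, ← pow_mul_pow_sub t hkn]
  field_simp

theorem HasSum.egf_of_succ {s : ℝ} (h : HasSum (fun k => a (k + 1) / (k + 1) / k ! * t ^ k) s) :
    HasSum (fun k => a k / k ! * t ^ k) (a 0 + t * s) := by
  refine (hasSum_nat_add_iff' 1).1 ?_
  simp only [range_one, sum_singleton, Nat.factorial_zero, Nat.cast_one, div_one, pow_zero,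
    mul_one, add_sub_cancel_left]
  refine (h.mul_left t).congr_fun fun k => ?_
  rw [Nat.factorial_succ]; push_cast; field_simp; ring

end egf

theorem add_pow_le_exp_mul_factorial {c : ℝ} (hc : 0 ≤ c) (k : ℕ) :
    (c + k) ^ k ≤ exp c * k ! / exp (-1) ^ k := by
  have h := pow_div_factorial_le_exp (x := c + k) (by positivity) k
  rw [div_le_iff₀ (by positivity)] at h
  calc (c + k) ^ k ≤ exp (c + k) * k ! := h
    _ = exp c * k ! / exp (-1) ^ k := by
      rw [← exp_nat_mul, exp_add, mul_neg_one, exp_neg, div_inv_eq_mul]; ring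

theorem abs_add_pow_le (c : ℝ) (k : ℕ) : |(c + k) ^ k| ≤ exp |c| * k ! / exp (-1) ^ k := by
  rw [abs_pow]
  refine (pow_le_pow_left₀ (abs_nonneg _) ?_ k).trans
    (add_pow_le_exp_mul_factorial (abs_nonneg c) k)
  exact (abs_add_le _ _).trans_eq (by simp)

theorem abs_abelPoly_le (c : ℝ) (k : ℕ) : |abelPoly c k| ≤ exp |c| * k ! / exp (-1) ^ k := by
  refine le_trans ?_ (add_pow_le_exp_mul_factorial (abs_nonneg c) k)
  rcases k with _ | k
  · simp [abelPoly]
  have hck : |c + (k + 1 : ℕ)| ≤ |c| + (k + 1 : ℕ) :=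
    (abs_add_le _ _).trans_eq (by rw [Nat.abs_cast])
  rw [abelPoly, abs_mul, abs_pow, pow_succ', ← Nat.cast_succ]
  gcongr
  linarith [Nat.cast_nonneg (α := ℝ) (k + 1)]

section lambert

variable {t : ℝ}

theorem egf_abelPoly_mul_egf_add_pow (c d : ℝ) (ht : |t| < exp (-1)) :
    egf (abelPoly c) t * egf (fun k => (d + k) ^ k) t = egf (fun k => (c + d + k) ^ k) t := by
  rw [egf_mul (abs_abelPoly_le c) (abs_add_pow_le d) ht]
  congr 1 with n
  rw [add_assoc, ← abel_identity n c (d + n)]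
  refine sum_congr rfl fun k hk => ?_
  rw [Nat.cast_sub (Nat.lt_succ_iff.1 (mem_range.1 hk))]
  ring_nf

theorem egf_pow_self_eq (ht : |t| < exp (-1)) :
    egf (fun k => (k : ℝ) ^ k) t = 1 + t * egf (fun k => (1 + k) ^ k) t := by
  have h := HasSum.egf_of_succ (a := fun k => (k : ℝ) ^ k) (t := t)
    ((hasSum_egf (abs_add_pow_le 1) ht).congr_fun fun k => ?_)
  · simpa using ((hasSum_egf (abs_add_pow_le 0) ht).unique (by simpa using h))
  · push_cast; rw [pow_succ]; field_simp; ring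

theorem hasDerivAt_egf_abelPoly (c : ℝ) (ht : |t| < exp (-1)) :
    HasDerivAt (egf (abelPoly c)) (c * egf (fun k => (c + 1 + k) ^ k) t) t := by
  refine (hasDerivAt_egf (abs_abelPoly_le c) ht).congr_deriv ?_
  rw [egf, egf, ← tsum_mul_left]
  refine tsum_congr fun k => ?_
  simp only [abelPoly]; ring

-- `T(t) = ∑_{k ≥ 1} k^(k-1) t^k / k!`, i.e. `-W(-t)` for Lambert's `W`, since
-- `(1 + k)^(k-1) / k! = (k+1)^k / (k+1)!`.
noncomputable def treeFun (t : ℝ) : ℝ := t * egf (abelPoly 1) t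

theorem hasDerivAt_treeFun (ht : |t| < exp (-1)) :
    HasDerivAt treeFun (egf (abelPoly 1) t * egf (fun k => (k : ℝ) ^ k) t) t := by
  refine ((hasDerivAt_id t).mul (hasDerivAt_egf_abelPoly 1 ht)).congr_deriv ?_
  have h := egf_abelPoly_mul_egf_add_pow 1 1 ht
  rw [egf_pow_self_eq ht, ← h]
  simp only [id]; ring

theorem egf_pow_self_mul_one_sub_treeFun (ht : |t| < exp (-1)) :
    egf (fun k => (k : ℝ) ^ k) t * (1 - treeFun t) = 1 := by
  have h := egf_abelPoly_mul_egf_add_pow 1 0 ht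
  simp only [add_zero, zero_add] at h
  have h0 := egf_pow_self_eq ht
  rw [treeFun]
  linear_combination h0 - t * h

theorem egf_abelPoly_eq_exp (c : ℝ) (ht : |t| < exp (-1)) :
    egf (abelPoly c) t = exp (c * treeFun t) := by
  set s := Set.Ioo (-exp (-1)) (exp (-1))
  set p : ℝ → ℝ := fun y => egf (abelPoly c) y * exp (-(c * treeFun y))
  have hp : ∀ y ∈ s, HasDerivAt p 0 y := by
    intro y hy
    have hy : |y| < exp (-1) := abs_lt.2 hy
    refine ((hasDerivAt_egf_abelPoly c hy).mul
      (((hasDerivAt_treeFun hy).const_mul c).neg.exp)).congr_deriv ?_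
    have h1 := egf_abelPoly_mul_egf_add_pow c 1 hy
    have h2 := egf_abelPoly_mul_egf_add_pow 1 0 hy
    simp only [add_zero, zero_add] at h2
    rw [← h1, ← h2]; ring
  have hconst := isOpen_Ioo.is_const_of_deriv_eq_zero isPreconnected_Ioo
    (fun y hy => (hp y hy).differentiableAt.differentiableWithinAt)
    (fun y hy => (hp y hy).deriv) (abs_lt.1 ht) (show (0 : ℝ) ∈ s by simp [s, exp_pos])
  have hexp : exp (-(c * treeFun t)) * exp (c * treeFun t) = 1 := by rw [← exp_add]; simp
  simp only [p, treeFun, egf_zero, abelPoly, mul_zero, neg_zero, exp_zero,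
    mul_one] at hconst hexp ⊢
  linear_combination exp (c * (t * egf (abelPoly 1) t)) * hconst - egf (abelPoly c) t * hexp

theorem egf_add_pow_eq_exp_div (c : ℝ) (ht : |t| < exp (-1)) :
    egf (fun k => (c + k) ^ k) t = exp (c * treeFun t) / (1 - treeFun t) := by
  have h := egf_abelPoly_mul_egf_add_pow c 0 ht
  simp only [add_zero, zero_add] at h
  have hg := egf_pow_self_mul_one_sub_treeFun ht
  have hw : 1 - treeFun t ≠ 0 := right_ne_zero_of_mul_eq_one hg
  rw [← h, egf_abelPoly_eq_exp c ht, eq_div_iff hw, mul_assoc, hg, mul_one]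

end lambert

theorem mul_exp_neg_lt_exp_neg_one {x : ℝ} (hx : x ≠ 1) : x * exp (-x) < exp (-1) := by
  have h := add_one_lt_exp (sub_ne_zero.2 hx)
  calc x * exp (-x) < exp (x - 1) * exp (-x) := by gcongr; linarith
    _ = exp (-1) := by rw [← exp_add]; ring_nf

theorem injOn_mul_exp_neg : Set.InjOn (fun x : ℝ => x * exp (-x)) (Set.Ico 0 1) := by
  -- `x = y e^(x-y) ≥ y (1 + x - y)` forces `(x - y) (1 - y) ≥ 0`.
  have key : ∀ x y : ℝ, 0 ≤ y → y < 1 → x * exp (-x) = y * exp (-y) → y ≤ x := by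
    intro x y hy0 hy1 h
    have hx : x = y * exp (x - y) := by
      rw [sub_eq_add_neg, exp_add, mul_left_comm, ← h, mul_left_comm, ← exp_add]; simp
    have := mul_le_mul_of_nonneg_left (add_one_le_exp (x - y)) hy0
    nlinarith
  exact fun x hx y hy h => le_antisymm (key y x hx.1 hx.2 h.symm) (key x y hy.1 hy.2 h)

theorem treeFun_mul_exp_neg {β : ℝ} (hβ0 : 0 ≤ β) (hβ1 : β < 1) :
    treeFun (β * exp (-β)) = β := by
  set t := β * exp (-β)
  have ht0 : 0 ≤ t := by positivity
  have ht : |t| < exp (-1) := by rw [abs_of_nonneg ht0]; exact mul_exp_neg_lt_exp_neg_one hβ1.ne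
  have hw : treeFun t = t * exp (treeFun t) := by
    conv_lhs => rw [treeFun, egf_abelPoly_eq_exp 1 ht, one_mul]
  have hw0 : 0 ≤ treeFun t := by rw [hw]; positivity
  have hg0 : 0 ≤ egf (fun k => (k : ℝ) ^ k) t := tsum_nonneg fun k => by positivity
  have hw1 : treeFun t < 1 := by nlinarith [egf_pow_self_mul_one_sub_treeFun ht]
  refine injOn_mul_exp_neg ⟨hw0, hw1⟩ ⟨hβ0, hβ1⟩ ?_
  calc treeFun t * exp (-treeFun t) = t * exp (treeFun t) * exp (-treeFun t) := by rw [← hw]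
    _ = t := by rw [mul_assoc, ← exp_add]; simp

theorem hasSum_add_pow_succ_mul_pow (c : ℝ) {β : ℝ} (hβ0 : 0 ≤ β) (hβ1 : β < 1) :
    HasSum (fun k : ℕ => (c + k) ^ (k + 1) / k ! * (β * exp (-β)) ^ k)
      (exp (c * β) * (c / (1 - β) ^ 2 + β / (1 - β) ^ 3)) := by
  set t := β * exp (-β)
  have ht : |t| < exp (-1) := by
    rw [abs_of_nonneg (by positivity)]; exact mul_exp_neg_lt_exp_neg_one hβ1.ne
  have h1β : 1 - β ≠ 0 := sub_ne_zero.2 hβ1.ne'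
  have hw : treeFun t = β := treeFun_mul_exp_neg hβ0 hβ1
  have htE : t * egf (abelPoly 1) t = β := hw
  have hg : egf (fun k => (k : ℝ) ^ k) t = (1 - β)⁻¹ := by
    rw [← hw]; exact eq_inv_of_mul_eq_one_left (egf_pow_self_mul_one_sub_treeFun ht)
  have hclosed : egf (fun k => (c + k) ^ k) =ᶠ[nhds t]
      fun y => exp (c * treeFun y) / (1 - treeFun y) := by
    filter_upwards [isOpen_Ioo.mem_nhds (abs_lt.1 ht)] with y hy
    exact egf_add_pow_eq_exp_div c (abs_lt.2 hy)
  have hderiv := (hasDerivAt_egf (abs_add_pow_le c) ht).unique <| hclosed.hasDerivAt_iff.2 <|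
    (((hasDerivAt_treeFun ht).const_mul c).exp).div ((hasDerivAt_treeFun ht).const_sub 1)
      (by rwa [hw])
  -- `(c + k)^(k+1) = k (c + k)^k + c (c + k)^k`, and the first part sums to `t` times the
  -- derivative of `∑ (c + k)^k t^k / k!`.
  have hsum := (HasSum.egf_of_succ (a := fun k => k * (c + k) ^ k) (t := t)
    ((hasSum_egf_succ (abs_add_pow_le c) ht).congr_fun fun k => ?_)).add
    ((hasSum_egf (abs_add_pow_le c) ht).mul_left c)
  · convert hsum using 1
    · funext k; ring
    rw [hderiv, egf_add_pow_eq_exp_div c ht, hw, hg]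
    field_simp
    linear_combination (-(exp (c * β) * (c * (1 - β) + 1))) * htE
  · push_cast; field_simp

theorem jain_S2_general (α β : ℝ) (hβ0 : 0 ≤ β) (hβ1 : β < 1) :
    HasSum (fun k : ℕ =>
      (α + β * k) ^ (k + 1) / (Nat.factorial k) * Real.exp (-(α + β * k)))
      (α / (1 - β) ^ 2 + β ^ 2 / (1 - β) ^ 3) := by
  rcases hβ0.eq_or_lt with rfl | hβ
  · have h := (Real.exp_eq_exp_ℝ ▸ NormedSpace.expSeries_div_hasSum_exp α).mul_left
      (α * exp (-α))
    rw [mul_assoc, ← exp_add, neg_add_cancel, exp_zero, mul_one] at h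
    rw [show α / (1 - 0) ^ 2 + 0 ^ 2 / (1 - 0) ^ 3 = α by norm_num]
    refine h.congr_fun fun k => ?_
    simp only [zero_mul, add_zero]
    ring
  · have hterm : ∀ k : ℕ, (α + β * k) ^ (k + 1) / k ! * exp (-(α + β * k))
        = β * exp (-α) * ((α / β + k) ^ (k + 1) / k ! * (β * exp (-β)) ^ k) := fun k => by
      rw [show α + β * k = β * (α / β + k) by field_simp, mul_pow, mul_pow, ← exp_nat_mul,
        show -(β * (α / β + k)) = -α + k * -β by field_simp; ring, exp_add]
      ring
    have hval : β * exp (-α) * (exp (α / β * β) * (α / β / (1 - β) ^ 2 + β / (1 - β) ^ 3))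
        = α / (1 - β) ^ 2 + β ^ 2 / (1 - β) ^ 3 := by
      rw [div_mul_cancel₀ α hβ.ne', mul_assoc, ← mul_assoc (exp (-α)), ← exp_add,
        neg_add_cancel, exp_zero, one_mul]
      field_simp
    simpa only [hterm, hval] using
      (hasSum_add_pow_succ_mul_pow (α / β) hβ0 hβ1).mul_left (β * exp (-α))

theorem jain_S2 (α β : ℝ) (hα : 0 < α) (hβ0 : 0 ≤ β) (hβ1 : β < 1) :
    HasSum (fun k : ℕ =>
      (α + β * k) ^ (k + 1) / (Nat.factorial k) * Real.exp (-(α + β * k)))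
      (α / (1 - β) ^ 2 + β ^ 2 / (1 - β) ^ 3) :=
  jain_S2_general α β hβ0 hβ1
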